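/- arXiv:1506.01901 — 4 statements merged into one kernel-verified Lean document; each statement's English description precedes it below -/
import Mathlib

section
/- Let (α,p) ∈ (0,1)×[1,∞) and let {K_j}_{j=1}^∞ be compact subsets of ℝⁿ with K_j ⊇ K_{j+1} for every j. Then C_{α,p,∞}(∩_{j=1}^∞ K_j) = lim_{j→∞} C_{α,p,∞}(K_j). -/
/-! Admissibility only asks for `f ≥ 1` on an open neighbourhood `N` of the set. If `N` contains
`⋂ j, K j`, then by compactness it already contains some `K j`, so every admissible function for the
intersection is admissible for some `K j`; with monotonicity of the capacity this identifies the
capacity of the intersection with the infimum, i.e. the limit, of the capacities of the `K j`. -/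

open MeasureTheory ENNReal

noncomputable def besovSeminorm (n : ℕ) (α p : ℝ)
    (f : EuclideanSpace ℝ (Fin n) → ℝ) : ℝ≥0∞ :=
  ⨆ (h : EuclideanSpace ℝ (Fin n)) (_ : h ≠ 0),
    ENNReal.ofReal (‖h‖ ^ (-α)) *
      eLpNorm (fun x => f (x + h) - f x) (ENNReal.ofReal p) volume

def besovAdmissible (n : ℕ) (α p : ℝ) (E : Set (EuclideanSpace ℝ (Fin n)))
    (f : EuclideanSpace ℝ (Fin n) → ℝ) : Prop :=
  MemLp f (ENNReal.ofReal p) volume ∧ besovSeminorm n α p f < ⊤ ∧ Continuous f ∧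
    ∃ N : Set (EuclideanSpace ℝ (Fin n)), IsOpen N ∧ E ⊆ N ∧ ∀ x ∈ N, 1 ≤ f x

noncomputable def besovCapacity (n : ℕ) (α p : ℝ)
    (E : Set (EuclideanSpace ℝ (Fin n))) : ℝ≥0∞ :=
  ⨅ (f : EuclideanSpace ℝ (Fin n) → ℝ) (_ : besovAdmissible n α p E f),
    besovSeminorm n α p f ^ p

noncomputable def besovPerimeter (n : ℕ) (α p : ℝ)
    (E : Set (EuclideanSpace ℝ (Fin n))) : ℝ≥0∞ :=
  besovSeminorm n α p (E.indicator fun _ => (1 : ℝ))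

section

variable {n : ℕ} {α p : ℝ} {E F : Set (EuclideanSpace ℝ (Fin n))}
  {f : EuclideanSpace ℝ (Fin n) → ℝ}

lemma besovAdmissible.mono_set (hEF : E ⊆ F) (hf : besovAdmissible n α p F f) :
    besovAdmissible n α p E f := by
  obtain ⟨hLp, hsemi, hcont, N, hN, hFN, hfN⟩ := hf
  exact ⟨hLp, hsemi, hcont, N, hN, hEF.trans hFN, hfN⟩

lemma besovCapacity_le_of_besovAdmissible (hf : besovAdmissible n α p E f) :
    besovCapacity n α p E ≤ besovSeminorm n α p f ^ p :=
  iInf₂_le f hf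

lemma besovCapacity_mono (hEF : E ⊆ F) : besovCapacity n α p E ≤ besovCapacity n α p F :=
  le_iInf₂ fun _ hf => besovCapacity_le_of_besovAdmissible (hf.mono_set hEF)

lemma besovAdmissible.exists_of_iInter {ι : Type*} [Nonempty ι]
    {V : ι → Set (EuclideanSpace ℝ (Fin n))} (hV : Directed (· ⊇ ·) V)
    (hVc : ∀ i, IsCompact (V i)) (hf : besovAdmissible n α p (⋂ i, V i) f) :
    ∃ i, besovAdmissible n α p (V i) f := by
  obtain ⟨hLp, hsemi, hcont, N, hN, hVN, hfN⟩ := hf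
  obtain ⟨i, hi⟩ := exists_subset_nhds_of_isCompact hV hVc fun x hx => hN.mem_nhds (hVN hx)
  exact ⟨i, hLp, hsemi, hcont, N, hN, hi, hfN⟩

lemma besovCapacity_iInter_of_directed {ι : Type*} [Nonempty ι]
    {V : ι → Set (EuclideanSpace ℝ (Fin n))} (hV : Directed (· ⊇ ·) V)
    (hVc : ∀ i, IsCompact (V i)) :
    besovCapacity n α p (⋂ i, V i) = ⨅ i, besovCapacity n α p (V i) := by
  refine le_antisymm (le_iInf fun i => besovCapacity_mono (Set.iInter_subset V i)) ?_
  refine le_iInf₂ fun f hf => ?_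
  obtain ⟨i, hi⟩ := hf.exists_of_iInter hV hVc
  exact (iInf_le _ i).trans (besovCapacity_le_of_besovAdmissible hi)

end

theorem besovCapacity_iInter_compacts_general (n : ℕ) (α p : ℝ)
    (K : ℕ → Set (EuclideanSpace ℝ (Fin n)))
    (hK : ∀ j, IsCompact (K j)) (hmono : ∀ j, K (j + 1) ⊆ K j) :
    Filter.Tendsto (fun j => besovCapacity n α p (K j)) Filter.atTop
      (nhds (besovCapacity n α p (⋂ j, K j))) := by
  have hanti : Antitone K := antitone_nat_of_succ_le hmono
  rw [besovCapacity_iInter_of_directed hanti.directed_ge hK]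
  exact tendsto_atTop_iInf fun _ _ hij => besovCapacity_mono (hanti hij)

theorem besovCapacity_iInter_compacts (n : ℕ) (α p : ℝ)
    (hα : α ∈ Set.Ioo (0 : ℝ) 1) (hp : 1 ≤ p)
    (K : ℕ → Set (EuclideanSpace ℝ (Fin n)))
    (hK : ∀ j, IsCompact (K j)) (hmono : ∀ j, K (j + 1) ⊆ K j) :
    Filter.Tendsto (fun j => besovCapacity n α p (K j)) Filter.atTop
      (nhds (besovCapacity n α p (⋂ j, K j))) :=
  besovCapacity_iInter_compacts_general n α p K hK hmono
end

section
/- Let (α,p) ∈ (0,1)×[1,∞) and let f ∈ L^p(ℝⁿ). Then the co-area type inequality ‖ |f| ‖_{Λ̇_α^{p,∞}} ≤ ∫_0^∞ P_{α,p,∞}({ x ∈ ℝⁿ : |f(x)| > t }) dt holds. -/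
open MeasureTheory ENNReal

/-! For `a, b ≥ 0` the layers `{t < a}` and `{t < b}` of `(0, ∞)` differ exactly on an interval
of length `|a - b|`, so `|a - b| = ∫₀^∞ |1_{t < a} - 1_{t < b}| dt`. Applied pointwise to
`a = |f (x + h)|`, `b = |f x|`, this writes the difference quotient of `|f|` as an integral over
`t` of the difference quotients of the indicators of the superlevel sets `{t < |f|}`;
Minkowski's integral inequality moves the `Lᵖ` norm inside the `t`-integral, and each term is
then bounded by the perimeter of `{t < |f|}`. -/

theorem ENNReal.rpow_one_div_le_of_le_mul_rpow {p q : ℝ} (hpq : p.HolderConjugate q)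
    {A B : ℝ≥0∞} (hA : A ≠ ⊤) (h : A ≤ B * A ^ (1 / q)) : A ^ (1 / p) ≤ B := by
  rcases eq_or_ne A 0 with rfl | hA0
  · rw [zero_rpow_of_pos (one_div_pos.2 hpq.pos)]
    exact zero_le
  have hAq_ne_zero : A ^ (1 / q) ≠ 0 := (rpow_pos (pos_iff_ne_zero.2 hA0) hA).ne'
  have hAq_ne_top : A ^ (1 / q) ≠ ⊤ := rpow_ne_top_of_nonneg hpq.symm.one_div_nonneg hA
  rw [← ENNReal.mul_le_mul_iff_left hAq_ne_zero hAq_ne_top]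
  calc A ^ (1 / p) * A ^ (1 / q) = A := by
        rw [← rpow_add_of_nonneg _ _ hpq.one_div_nonneg hpq.symm.one_div_nonneg, one_div, one_div,
          hpq.inv_add_inv_eq_one, rpow_one]
    _ ≤ B * A ^ (1 / q) := h

section Minkowski

variable {X T : Type*} [MeasurableSpace X] [MeasurableSpace T] {μ : Measure X} {ν : Measure T}
  [SFinite μ] [SFinite ν] {F : X → ℝ≥0∞} {G : T → X → ℝ≥0∞}

theorem lintegral_rpow_le_mul_of_le_lintegral {p q : ℝ} (hpq : p.HolderConjugate q)
    (hF : Measurable F) (hG : Measurable (Function.uncurry G)) (hFG : ∀ x, F x ≤ ∫⁻ t, G t x ∂ν) :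
    ∫⁻ x, F x ^ p ∂μ ≤
      (∫⁻ t, (∫⁻ x, G t x ^ p ∂μ) ^ (1 / p) ∂ν) * (∫⁻ x, F x ^ p ∂μ) ^ (1 / q) := by
  have holder (t : T) : ∫⁻ x, G t x * F x ^ (p - 1) ∂μ ≤
      (∫⁻ x, G t x ^ p ∂μ) ^ (1 / p) * (∫⁻ x, F x ^ p ∂μ) ^ (1 / q) := by
    calc ∫⁻ x, G t x * F x ^ (p - 1) ∂μ
        ≤ (∫⁻ x, G t x ^ p ∂μ) ^ (1 / p) * (∫⁻ x, (F x ^ (p - 1)) ^ q ∂μ) ^ (1 / q) :=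
          ENNReal.lintegral_mul_le_Lp_mul_Lq μ hpq
            (hG.comp measurable_prodMk_left : Measurable (G t)).aemeasurable
            (hF.pow_const (p - 1)).aemeasurable
      _ = _ := by simp_rw [← rpow_mul, hpq.sub_one_mul_conj]
  calc ∫⁻ x, F x ^ p ∂μ = ∫⁻ x, F x * F x ^ (p - 1) ∂μ := by
        refine lintegral_congr fun x => ?_
        conv_lhs => rw [← add_sub_cancel 1 p]
        rw [rpow_add_of_nonneg _ _ zero_le_one (by linarith [hpq.lt]), rpow_one]
    _ ≤ ∫⁻ x, ∫⁻ t, G t x * F x ^ (p - 1) ∂ν ∂μ := by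
        refine lintegral_mono fun x => ?_
        have hGx : Measurable (G · x) := hG.comp measurable_prodMk_right
        rw [lintegral_mul_const _ hGx]
        exact mul_le_mul_left (hFG x) _
    _ = ∫⁻ t, ∫⁻ x, G t x * F x ^ (p - 1) ∂μ ∂ν :=
        lintegral_lintegral_swap ((hG.comp measurable_swap).mul
          ((hF.comp measurable_fst).pow_const _)).aemeasurable
    _ ≤ ∫⁻ t, (∫⁻ x, G t x ^ p ∂μ) ^ (1 / p) * (∫⁻ x, F x ^ p ∂μ) ^ (1 / q) ∂ν :=
        lintegral_mono holder
    _ = _ := lintegral_mul_const _ ((hG.pow_const p).lintegral_prod_right'.pow_const _)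

theorem eLpNorm_le_lintegral_eLpNorm_of_le_lintegral {p : ℝ≥0∞} (hp : 1 ≤ p) (hp_top : p ≠ ⊤)
    (hF : Measurable F) (hG : Measurable (Function.uncurry G)) (hFG : ∀ x, F x ≤ ∫⁻ t, G t x ∂ν)
    (hF_fin : eLpNorm F p μ ≠ ⊤) :
    eLpNorm F p μ ≤ ∫⁻ t, eLpNorm (G t) p μ ∂ν := by
  rcases hp.eq_or_lt with rfl | hp_one
  · simp only [eLpNorm_one_eq_lintegral_enorm, enorm_eq_self]
    calc ∫⁻ x, F x ∂μ ≤ ∫⁻ x, ∫⁻ t, G t x ∂ν ∂μ := lintegral_mono hFG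
      _ = ∫⁻ t, ∫⁻ x, G t x ∂μ ∂ν :=
        lintegral_lintegral_swap (hG.comp measurable_swap).aemeasurable
  have hpq := Real.HolderConjugate.conjExponent
    (by simpa using (toReal_lt_toReal one_ne_top hp_top).2 hp_one)
  have hp0 : p ≠ 0 := (zero_lt_one.trans_le hp).ne'
  simp only [eLpNorm_eq_lintegral_rpow_enorm_toReal hp0 hp_top, enorm_eq_self] at hF_fin ⊢
  refine ENNReal.rpow_one_div_le_of_le_mul_rpow hpq ?_
    (lintegral_rpow_le_mul_of_le_lintegral hpq hF hG hFG)
  exact (rpow_eq_top_iff_of_pos (one_div_pos.2 hpq.pos)).not.mp hF_fin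

end Minkowski

theorem enorm_indicator_Ioi_sub_indicator_Ioi (a b t : ℝ) :
    ‖(Set.Ioi t).indicator (fun _ => (1 : ℝ)) a - (Set.Ioi t).indicator (fun _ => 1) b‖ₑ =
      (Set.Ico (min a b) (max a b)).indicator 1 t := by
  rcases lt_or_ge t a with hta | hat <;> rcases lt_or_ge t b with htb | hbt <;>
    simp [*]

theorem lintegral_enorm_indicator_Ioi_sub_indicator_Ioi {a b : ℝ} (ha : 0 ≤ a) (hb : 0 ≤ b) :
    ∫⁻ t in Set.Ioi 0,
      ‖(Set.Ioi t).indicator (fun _ => (1 : ℝ)) a - (Set.Ioi t).indicator (fun _ => 1) b‖ₑ =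
      ‖a - b‖ₑ := by
  have hsub : Set.Ico (min a b) (max a b) ⊆ Set.Ici 0 := fun t ht => (le_min ha hb).trans ht.1
  simp_rw [enorm_indicator_Ioi_sub_indicator_Ioi, Measure.restrict_congr_set Ioi_ae_eq_Ici,
    lintegral_indicator_one measurableSet_Ico, Measure.restrict_apply measurableSet_Ico,
    Set.inter_eq_left.2 hsub, Real.volume_Ico, max_sub_min_eq_abs, abs_sub_comm,
    Real.enorm_eq_ofReal_abs]

theorem eLpNorm_sub_le_lintegral_eLpNorm_indicator_sub {X : Type*} [MeasurableSpace X]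
    {μ : Measure X} [SFinite μ] {p : ℝ≥0∞} (hp : 1 ≤ p) (hp_top : p ≠ ⊤) {u v : X → ℝ}
    (hu : Measurable u) (hv : Measurable v) (hu0 : 0 ≤ u) (hv0 : 0 ≤ v)
    (huv : eLpNorm (u - v) p μ ≠ ⊤) :
    eLpNorm (u - v) p μ ≤ ∫⁻ t in Set.Ioi 0,
      eLpNorm ({x | t < u x}.indicator (1 : X → ℝ) - {x | t < v x}.indicator 1) p μ := by
  have hmeas (w : X → ℝ) (hw : Measurable w) :
      Measurable fun q : ℝ × X => {x | q.1 < w x}.indicator (1 : X → ℝ) q.2 :=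
    measurable_const.indicator (measurableSet_lt measurable_fst (hw.comp measurable_snd))
  rw [← eLpNorm_enorm] at huv ⊢
  refine (eLpNorm_le_lintegral_eLpNorm_of_le_lintegral (ν := volume.restrict (Set.Ioi (0 : ℝ)))
    (G := fun t x => ‖{x | t < u x}.indicator (1 : X → ℝ) x - {x | t < v x}.indicator 1 x‖ₑ)
    hp hp_top (hu.sub hv).enorm ((hmeas u hu).sub (hmeas v hv)).enorm (fun x => ?_) huv).trans_eq ?_
  · exact (lintegral_enorm_indicator_Ioi_sub_indicator_Ioi (hu0 x) (hv0 x)).symm.le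
  · exact lintegral_congr fun t => eLpNorm_enorm _

section Besov

variable {n : ℕ} {α p : ℝ}

theorem le_besovSeminorm (u : EuclideanSpace ℝ (Fin n) → ℝ) {h : EuclideanSpace ℝ (Fin n)}
    (hh : h ≠ 0) :
    ENNReal.ofReal (‖h‖ ^ (-α)) * eLpNorm (fun x => u (x + h) - u x) (ENNReal.ofReal p) volume ≤
      besovSeminorm n α p u :=
  le_iSup₂ (f := fun h (_ : h ≠ 0) => ENNReal.ofReal (‖h‖ ^ (-α)) *
    eLpNorm (fun x => u (x + h) - u x) (ENNReal.ofReal p) volume) h hh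

theorem besovSeminorm_congr_ae {u v : EuclideanSpace ℝ (Fin n) → ℝ} (huv : u =ᵐ[volume] v) :
    besovSeminorm n α p u = besovSeminorm n α p v := by
  have huv_add (h : EuclideanSpace ℝ (Fin n)) :
      (fun x => u (x + h)) =ᵐ[volume] fun x => v (x + h) :=
    (measurePreserving_add_right volume h).quasiMeasurePreserving.ae_eq_comp huv
  refine iSup_congr fun h => iSup_congr fun _ => ?_
  congr 1
  exact eLpNorm_congr_ae ((huv_add h).sub huv)

theorem besovPerimeter_congr_ae {E F : Set (EuclideanSpace ℝ (Fin n))} (hEF : E =ᵐ[volume] F) :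
    besovPerimeter n α p E = besovPerimeter n α p F :=
  besovSeminorm_congr_ae (indicator_ae_eq_of_ae_eq_set hEF)

theorem besovSeminorm_abs_le_lintegral_besovPerimeter (hp : 1 ≤ p)
    {g : EuclideanSpace ℝ (Fin n) → ℝ} (hg_meas : Measurable g)
    (hg : MemLp g (ENNReal.ofReal p) volume) :
    besovSeminorm n α p (fun x => |g x|) ≤
      ∫⁻ t in Set.Ioi 0, besovPerimeter n α p {x | t < |g x|} := by
  refine iSup₂_le fun h hh => ?_
  have habs : MemLp (fun x => |g x|) (ENNReal.ofReal p) volume := hg.abs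
  have hdiff : MemLp (fun x => |g (x + h)| - |g x|) (ENNReal.ofReal p) volume :=
    (habs.comp_measurePreserving (measurePreserving_add_right volume h)).sub habs
  refine (mul_le_mul_right (eLpNorm_sub_le_lintegral_eLpNorm_indicator_sub
    (ENNReal.one_le_ofReal.2 hp) ofReal_ne_top (hg_meas.comp (measurable_add_const h)).abs
    hg_meas.abs (fun _ => abs_nonneg _) (fun _ => abs_nonneg _) hdiff.eLpNorm_ne_top) _).trans ?_
  rw [← lintegral_const_mul' _ _ ofReal_ne_top]
  exact lintegral_mono fun t => le_besovSeminorm ({y | t < |g y|}.indicator fun _ => 1) hh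

end Besov

theorem besov_coarea_inequality_general (n : ℕ) (α p : ℝ)
    (hp : 1 ≤ p)
    (f : EuclideanSpace ℝ (Fin n) → ℝ)
    (hf : MemLp f (ENNReal.ofReal p) volume) :
    besovSeminorm n α p (fun x => |f x|) ≤
      ∫⁻ t in Set.Ioi (0 : ℝ), besovPerimeter n α p {x | t < |f x|} := by
  obtain ⟨g, hg_meas, hfg⟩ := hf.aestronglyMeasurable.aemeasurable
  calc besovSeminorm n α p (fun x => |f x|)
      = besovSeminorm n α p (fun x => |g x|) := besovSeminorm_congr_ae (hfg.fun_comp abs)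
    _ ≤ ∫⁻ t in Set.Ioi 0, besovPerimeter n α p {x | t < |g x|} :=
        besovSeminorm_abs_le_lintegral_besovPerimeter hp hg_meas (hf.ae_eq hfg)
    _ = ∫⁻ t in Set.Ioi 0, besovPerimeter n α p {x | t < |f x|} :=
        lintegral_congr fun t =>
          besovPerimeter_congr_ae (hfg.symm.mono fun x hx => congrArg (t < |·|) hx)

theorem besov_coarea_inequality (n : ℕ) (α p : ℝ)
    (hα : α ∈ Set.Ioo (0 : ℝ) 1) (hp : 1 ≤ p)
    (f : EuclideanSpace ℝ (Fin n) → ℝ)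
    (hf : MemLp f (ENNReal.ofReal p) volume) :
    besovSeminorm n α p (fun x => |f x|) ≤
      ∫⁻ t in Set.Ioi (0 : ℝ), besovPerimeter n α p {x | t < |f x|} :=
  besov_coarea_inequality_general n α p hp f hf
end

section
/- Let (α,p) ∈ (0,1)×[1,∞). For every Euclidean ball B(x₀,r₀) ⊆ ℝⁿ with center x₀ and radius r₀ > 0, C_{α,p,∞}(B(x₀,r₀)) = r₀^{n−αp} · C_{α,p,∞}(𝔹ⁿ), where 𝔹ⁿ is the open unit ball of ℝⁿ. -/
open MeasureTheory ENNReal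

open Module

/-!
Under the affine map `T x = c • x + v`, Lebesgue measure scales by `|c|ⁿ`, so `L^p` norms of
`f ∘ T` pick up `|c|^(-n/p)`, while a difference of `f ∘ T` at step `h` is a difference of `f`
at step `c • h`; hence the Besov seminorm scales by `|c|^(α - n/p)` and, since `f ↦ f ∘ T`
maps functions admissible for `A` to functions admissible for `T⁻¹ A`, the capacity by
`|c|^(αp - n)`. Applying this to `T` and to `T⁻¹` gives equality, and `B(x₀, r₀)` is the
preimage of the unit ball under `x ↦ r₀⁻¹ • (x - x₀)`.
-/

theorem eLpNorm_comp_smul_add {E ε : Type*} [NormedAddCommGroup E] [NormedSpace ℝ E]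
    [MeasurableSpace E] [BorelSpace E] [FiniteDimensional ℝ E] [TopologicalSpace ε]
    [ContinuousENorm ε] (μ : Measure E) [μ.IsAddHaarMeasure] {c : ℝ} (hc : c ≠ 0) (v : E)
    (f : E → ε) (p : ℝ≥0∞) :
    eLpNorm (fun x => f (c • x + v)) p μ
      = ENNReal.ofReal (|c| ^ (-(finrank ℝ E / p.toReal))) * eLpNorm f p μ := by
  have hmap : Measure.map (fun x => c • x + v) μ = ENNReal.ofReal |(c ^ finrank ℝ E)⁻¹| • μ := by
    change Measure.map ((· + v) ∘ (c • ·)) μ = _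
    rw [← Measure.map_map (measurable_add_const v) (measurable_const_smul c),
      Measure.map_addHaar_smul μ hc, Measure.map_smul, map_add_right_eq_self]
  have hT : MeasurableEmbedding fun x => c • x + v :=
    ((Homeomorph.smulOfNeZero c hc).trans (Homeomorph.addRight v)).measurableEmbedding
  have hc' : 0 < |c| := abs_pos.2 hc
  rw [← Function.comp_def, ← hT.eLpNorm_map_measure, hmap,
    eLpNorm_smul_measure_of_ne_zero (by simp [hc]), smul_eq_mul,
    ENNReal.ofReal_rpow_of_nonneg (by positivity) ENNReal.toReal_nonneg, abs_inv, abs_pow,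
    ← Real.rpow_natCast, ← Real.rpow_neg_one, ← Real.rpow_mul hc'.le, ← Real.rpow_mul hc'.le,
    one_div, ENNReal.toReal_inv]
  ring_nf

section Besov

variable {n : ℕ} {α p : ℝ}

theorem besovSeminorm_comp_smul_add (hp : 0 ≤ p) {c : ℝ} (hc : c ≠ 0)
    (v : EuclideanSpace ℝ (Fin n)) (f : EuclideanSpace ℝ (Fin n) → ℝ) :
    besovSeminorm n α p (fun x => f (c • x + v))
      = ENNReal.ofReal (|c| ^ (α - n / p)) * besovSeminorm n α p f := by
  set G : EuclideanSpace ℝ (Fin n) → ℝ≥0∞ := fun k =>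
    ENNReal.ofReal (‖k‖ ^ (-α)) * eLpNorm (fun x => f (x + k) - f x) (ENNReal.ofReal p) volume
  have hc' : 0 < |c| := abs_pos.2 hc
  have hterm (h : EuclideanSpace ℝ (Fin n)) (hh : h ≠ 0) :
      ENNReal.ofReal (‖h‖ ^ (-α)) *
          eLpNorm (fun x => f (c • (x + h) + v) - f (c • x + v)) (ENNReal.ofReal p) volume
        = ENNReal.ofReal (|c| ^ (α - n / p)) * G (c • h) := by
    have hshift : (fun x => f (c • (x + h) + v) - f (c • x + v))
        = fun x => (fun y => f (y + c • h) - f y) (c • x + v) := by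
      ext x; rw [smul_add, add_right_comm]
    have hnorm : ‖h‖ ^ (-α) = |c| ^ α * ‖c • h‖ ^ (-α) := by
      rw [norm_smul, Real.norm_eq_abs, Real.mul_rpow hc'.le (norm_nonneg h), ← mul_assoc,
        ← Real.rpow_add hc', add_neg_cancel, Real.rpow_zero, one_mul]
    rw [hshift, eLpNorm_comp_smul_add volume hc v (fun y => f (y + c • h) - f y),
      finrank_euclideanSpace_fin, ENNReal.toReal_ofReal hp, hnorm, sub_eq_add_neg, Real.rpow_add hc',
      ENNReal.ofReal_mul (by positivity), ENNReal.ofReal_mul (by positivity)]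
    ring
  calc besovSeminorm n α p (fun x => f (c • x + v))
      = ⨆ (h) (_ : h ≠ 0), ENNReal.ofReal (|c| ^ (α - n / p)) * G (c • h) :=
        iSup_congr fun h => iSup_congr (hterm h)
    _ = ENNReal.ofReal (|c| ^ (α - n / p)) * ⨆ (h) (_ : c • h ≠ 0), G (c • h) := by
        simp only [ENNReal.mul_iSup, smul_ne_zero_iff_right hc]
    _ = ENNReal.ofReal (|c| ^ (α - n / p)) * besovSeminorm n α p f :=
        congrArg _ ((Homeomorph.smulOfNeZero c hc).toEquiv.iSup_congr fun _ => rfl)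

theorem besovAdmissible.comp_smul_add (hp : 0 ≤ p) {c : ℝ} (hc : c ≠ 0)
    (v : EuclideanSpace ℝ (Fin n)) {A : Set (EuclideanSpace ℝ (Fin n))}
    {f : EuclideanSpace ℝ (Fin n) → ℝ} (hf : besovAdmissible n α p A f) :
    besovAdmissible n α p ((fun x => c • x + v) ⁻¹' A) (fun x => f (c • x + v)) := by
  obtain ⟨hmem, hsemi, hcont, N, hN, hAN, hN1⟩ := hf
  have hT : Continuous fun x : EuclideanSpace ℝ (Fin n) => c • x + v := by fun_prop
  refine ⟨⟨(hcont.comp hT).aestronglyMeasurable, ?_⟩, ?_, hcont.comp hT, _, hN.preimage hT,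
    Set.preimage_mono hAN, fun x hx => hN1 _ hx⟩
  · rw [eLpNorm_comp_smul_add volume hc]
    exact mul_lt_top ofReal_lt_top hmem.2
  · rw [besovSeminorm_comp_smul_add hp hc]
    exact mul_lt_top ofReal_lt_top hsemi

theorem besovCapacity_preimage_smul_add_le (hp : 0 < p) {c : ℝ} (hc : c ≠ 0)
    (v : EuclideanSpace ℝ (Fin n)) (A : Set (EuclideanSpace ℝ (Fin n))) :
    besovCapacity n α p ((fun x => c • x + v) ⁻¹' A)
      ≤ ENNReal.ofReal (|c| ^ (α * p - n)) * besovCapacity n α p A := by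
  have hK : ENNReal.ofReal (|c| ^ (α * p - n)) ≠ 0 := (ENNReal.ofReal_pos.2 (by positivity)).ne'
  simp only [besovCapacity, ENNReal.mul_iInf_of_ne hK ofReal_ne_top]
  refine le_iInf₂ fun f hf => (iInf₂_le _ (hf.comp_smul_add hp.le hc v)).trans_eq ?_
  rw [besovSeminorm_comp_smul_add hp.le hc, ENNReal.mul_rpow_of_nonneg _ _ hp.le,
    ENNReal.ofReal_rpow_of_nonneg (by positivity) hp.le, ← Real.rpow_mul (abs_nonneg c)]
  congr 3
  field_simp

theorem besovCapacity_preimage_smul_add (hp : 0 < p) {c : ℝ} (hc : c ≠ 0)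
    (v : EuclideanSpace ℝ (Fin n)) (A : Set (EuclideanSpace ℝ (Fin n))) :
    besovCapacity n α p ((fun x => c • x + v) ⁻¹' A)
      = ENNReal.ofReal (|c| ^ (α * p - n)) * besovCapacity n α p A := by
  refine (besovCapacity_preimage_smul_add_le hp hc v A).antisymm ?_
  have hinverse : (fun x => c⁻¹ • x + -(c⁻¹ • v)) ⁻¹' ((fun x => c • x + v) ⁻¹' A) = A := by
    ext x
    simp [smul_smul, hc]
  have hpos : 0 < |c| ^ (α * p - n) := by positivity
  have hle := besovCapacity_preimage_smul_add_le (α := α) hp (inv_ne_zero hc) (-(c⁻¹ • v))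
    ((fun x => c • x + v) ⁻¹' A)
  rw [hinverse, abs_inv, Real.inv_rpow (abs_nonneg c), ENNReal.ofReal_inv_of_pos hpos] at hle
  exact (ENNReal.mul_le_iff_le_inv (by simpa using hpos) ofReal_ne_top).2 hle

end Besov

theorem besovCapacity_ball_general (n : ℕ) (α p : ℝ)
    (hp : 1 ≤ p)
    (x₀ : EuclideanSpace ℝ (Fin n)) (r₀ : ℝ) (hr₀ : 0 < r₀) :
    besovCapacity n α p (Metric.ball x₀ r₀) =
      ENNReal.ofReal (r₀ ^ ((n : ℝ) - α * p)) *
        besovCapacity n α p (Metric.ball (0 : EuclideanSpace ℝ (Fin n)) 1) := by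
  have hball : (fun x => r₀⁻¹ • x + -(r₀⁻¹ • x₀)) ⁻¹' Metric.ball 0 1 = Metric.ball x₀ r₀ := by
    ext x
    rw [Set.mem_preimage, mem_ball_zero_iff, ← smul_neg, ← smul_add, norm_smul, Real.norm_eq_abs,
      abs_inv, abs_of_pos hr₀, inv_mul_lt_one₀ hr₀, ← sub_eq_add_neg, ← dist_eq_norm,
      Metric.mem_ball]
  rw [← hball, besovCapacity_preimage_smul_add (by linarith) (inv_ne_zero hr₀.ne'), abs_inv,
    abs_of_pos hr₀, Real.inv_rpow hr₀.le, ← Real.rpow_neg hr₀.le, neg_sub]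

theorem besovCapacity_ball (n : ℕ) (α p : ℝ)
    (hα : α ∈ Set.Ioo (0 : ℝ) 1) (hp : 1 ≤ p)
    (x₀ : EuclideanSpace ℝ (Fin n)) (r₀ : ℝ) (hr₀ : 0 < r₀) :
    besovCapacity n α p (Metric.ball x₀ r₀) =
      ENNReal.ofReal (r₀ ^ ((n : ℝ) - α * p)) *
        besovCapacity n α p (Metric.ball (0 : EuclideanSpace ℝ (Fin n)) 1) :=
  besovCapacity_ball_general n α p hp x₀ r₀ hr₀
end

section
/- Let α ∈ (0,1), p ∈ [1, n/α), q ∈ [1,∞), and let μ be a nonnegative outer measure on ℝⁿ. Then the following are equivalent: (1) there is a constant c > 0 such that sup_{t>0} ( t^q μ({ x ∈ ℝⁿ : |f(x)| > t }) )^{1/q} ≤ c ‖f‖_{Λ̇_α^{p,∞}} for every f ∈ Λ_α^{p,∞} ∩ C(ℝⁿ); (2) there is a constant c > 0 such that μ(E) ≤ c ( C_{α,p,∞}(E) )^{q/p} for every Borel set E ⊆ ℝⁿ. -/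
open MeasureTheory ENNReal

/-!
If `f` is admissible for `E`, then `E ⊆ {|f| > 1/2}`, so the weak-type bound at level `1/2`
gives `μ E ≤ (2c‖f‖)^q = (2c)^q (‖f‖^p)^(q/p)`; the infimum over admissible `f` is the capacity
bound. Conversely, `t⁻¹|f|` is admissible for the open set `{|f| > t}` with seminorm at most
`t⁻¹‖f‖`, so the capacity bound controls `t^q μ{|f| > t}` uniformly in `t > 0`.
-/

namespace ENNReal

theorem iInf_rpow {ι : Sort*} (f : ι → ℝ≥0∞) {r : ℝ} (hr : 0 < r) :
    (⨅ i, f i) ^ r = ⨅ i, f i ^ r :=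
  (orderIsoRpow r hr).map_iInf f

theorem ofReal_rpow_mul_rpow_one_div_le_iff {t q : ℝ} (ht : 0 < t) (hq : 0 < q)
    {m b : ℝ≥0∞} :
    (ENNReal.ofReal t ^ q * m) ^ (1 / q) ≤ b ↔ m ≤ (ENNReal.ofReal t⁻¹ * b) ^ q := by
  have hcancel : ENNReal.ofReal t⁻¹ ^ q * ENNReal.ofReal t ^ q = 1 := by
    rw [← mul_rpow_of_nonneg _ _ hq.le, ← ofReal_mul (by positivity), inv_mul_cancel₀ ht.ne',
      ofReal_one, one_rpow]
  have hpos : ENNReal.ofReal t⁻¹ ^ q ≠ 0 := by positivity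
  rw [one_div, rpow_inv_le_iff hq, mul_rpow_of_nonneg _ _ hq.le,
    ← ENNReal.mul_le_mul_iff_right hpos (rpow_ne_top_of_nonneg hq.le ofReal_ne_top),
    ← mul_assoc, hcancel, one_mul]

end ENNReal

section Besov

variable {n : ℕ} {α p : ℝ}

theorem besovSeminorm_mono {f g : EuclideanSpace ℝ (Fin n) → ℝ}
    (hfg : ∀ x y, |g x - g y| ≤ |f x - f y|) :
    besovSeminorm n α p g ≤ besovSeminorm n α p f := by
  unfold besovSeminorm
  gcongr
  exact eLpNorm_mono fun x => hfg _ _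

theorem besovSeminorm_abs_le (f : EuclideanSpace ℝ (Fin n) → ℝ) :
    besovSeminorm n α p (fun x => |f x|) ≤ besovSeminorm n α p f :=
  besovSeminorm_mono fun _ _ => abs_abs_sub_abs_le_abs_sub _ _

theorem besovSeminorm_const_mul (c : ℝ) (f : EuclideanSpace ℝ (Fin n) → ℝ) :
    besovSeminorm n α p (fun x => c * f x) = ‖c‖ₑ * besovSeminorm n α p f := by
  simp only [besovSeminorm, ENNReal.mul_iSup, ← mul_sub]
  congr! 3 with h
  rw [show (fun x => c * (f (x + h) - f x)) = c • fun x => f (x + h) - f x from rfl,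
    eLpNorm_const_smul, mul_left_comm]

theorem besovAdmissible_inv_mul_abs {f : EuclideanSpace ℝ (Fin n) → ℝ}
    (hf : MemLp f (ENNReal.ofReal p) volume) (hfS : besovSeminorm n α p f < ⊤)
    (hfc : Continuous f) {t : ℝ} (ht : 0 < t) :
    besovAdmissible n α p {x | t < |f x|} (fun x => t⁻¹ * |f x|) := by
  have hS : besovSeminorm n α p (fun x => t⁻¹ * |f x|) < ⊤ := by
    rw [besovSeminorm_const_mul]
    exact mul_lt_top enorm_lt_top ((besovSeminorm_abs_le f).trans_lt hfS)
  refine ⟨hf.abs.const_mul t⁻¹, hS, continuous_const.mul hfc.abs, {x | t < |f x|},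
    isOpen_lt continuous_const hfc.abs, subset_rfl, fun x hx => ?_⟩
  rw [← inv_mul_cancel₀ ht.ne']
  exact mul_le_mul_of_nonneg_left (le_of_lt hx) (inv_nonneg.mpr ht.le)

theorem besovCapacity_superlevel_le (hp : 0 ≤ p) {f : EuclideanSpace ℝ (Fin n) → ℝ}
    (hf : MemLp f (ENNReal.ofReal p) volume) (hfS : besovSeminorm n α p f < ⊤)
    (hfc : Continuous f) {t : ℝ} (ht : 0 < t) :
    besovCapacity n α p {x | t < |f x|} ≤ (ENNReal.ofReal t⁻¹ * besovSeminorm n α p f) ^ p := by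
  refine (iInf₂_le _ (besovAdmissible_inv_mul_abs hf hfS hfc ht)).trans (rpow_le_rpow ?_ hp)
  rw [besovSeminorm_const_mul, Real.enorm_eq_ofReal (inv_nonneg.mpr ht.le)]
  gcongr
  exact besovSeminorm_abs_le f

theorem subset_superlevel_of_besovAdmissible {E : Set (EuclideanSpace ℝ (Fin n))}
    {f : EuclideanSpace ℝ (Fin n) → ℝ} (hf : besovAdmissible n α p E f) {t : ℝ} (ht : t < 1) :
    E ⊆ {x | t < |f x|} := by
  obtain ⟨-, -, -, N, -, hEN, hfN⟩ := hf
  exact fun x hx => ht.trans_le ((hfN x (hEN hx)).trans (le_abs_self _))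

theorem le_mul_besovCapacity_rpow {E : Set (EuclideanSpace ℝ (Fin n))} {m C : ℝ≥0∞}
    (hC₀ : C ≠ 0) (hC : C ≠ ⊤) {r : ℝ} (hr : 0 < r)
    (h : ∀ f, besovAdmissible n α p E f → m ≤ C * (besovSeminorm n α p f ^ p) ^ r) :
    m ≤ C * besovCapacity n α p E ^ r := by
  simp only [besovCapacity, iInf_rpow _ hr, mul_iInf_of_ne hC₀ hC]
  exact le_iInf₂ h

end Besov

section WeakTrace

variable {n : ℕ} {α p q c : ℝ} {μ : OuterMeasure (EuclideanSpace ℝ (Fin n))}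

theorem measure_le_mul_besovCapacity_of_weak_trace (hp : 0 < p) (hq : 0 < q) (hc : 0 < c)
    (htrace : ∀ f : EuclideanSpace ℝ (Fin n) → ℝ,
      MemLp f (ENNReal.ofReal p) volume → besovSeminorm n α p f < ⊤ → Continuous f →
      (⨆ (t : ℝ) (_ : 0 < t), (ENNReal.ofReal t ^ q * μ {x | t < |f x|}) ^ (1 / q)) ≤
        ENNReal.ofReal c * besovSeminorm n α p f)
    (E : Set (EuclideanSpace ℝ (Fin n))) :
    μ E ≤ ENNReal.ofReal ((2 * c) ^ q) * besovCapacity n α p E ^ (q / p) := by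
  refine le_mul_besovCapacity_rpow (by positivity) ofReal_ne_top (div_pos hq hp) fun f hf => ?_
  have hlevel : (ENNReal.ofReal (1 / 2) ^ q * μ {x | 1 / 2 < |f x|}) ^ (1 / q) ≤
      ENNReal.ofReal c * besovSeminorm n α p f :=
    (le_iSup₂ (f := fun (t : ℝ) (_ : 0 < t) => (ENNReal.ofReal t ^ q * μ {x | t < |f x|}) ^ (1 / q))
      (1 / 2) (by norm_num)).trans (htrace f hf.1 hf.2.1 hf.2.2.1)
  rw [ofReal_rpow_mul_rpow_one_div_le_iff (by norm_num) hq] at hlevel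
  calc μ E ≤ μ {x | 1 / 2 < |f x|} := μ.mono (subset_superlevel_of_besovAdmissible hf (by norm_num))
    _ ≤ (ENNReal.ofReal (1 / 2)⁻¹ * (ENNReal.ofReal c * besovSeminorm n α p f)) ^ q := hlevel
    _ = ENNReal.ofReal ((2 * c) ^ q) * (besovSeminorm n α p f ^ p) ^ (q / p) := by
      rw [← rpow_mul, mul_div_cancel₀ _ hp.ne', ← mul_assoc, ← ofReal_mul (by norm_num),
        mul_rpow_of_nonneg _ _ hq.le, ofReal_rpow_of_pos (by positivity)]
      norm_num

theorem weak_trace_le_of_measure_le_mul_besovCapacity (hp : 0 < p) (hq : 0 < q) (hc : 0 < c)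
    (hcap : ∀ E : Set (EuclideanSpace ℝ (Fin n)), MeasurableSet E →
      μ E ≤ ENNReal.ofReal c * besovCapacity n α p E ^ (q / p))
    {f : EuclideanSpace ℝ (Fin n) → ℝ} (hf : MemLp f (ENNReal.ofReal p) volume)
    (hfS : besovSeminorm n α p f < ⊤) (hfc : Continuous f) :
    (⨆ (t : ℝ) (_ : 0 < t), (ENNReal.ofReal t ^ q * μ {x | t < |f x|}) ^ (1 / q)) ≤
      ENNReal.ofReal (c ^ (1 / q)) * besovSeminorm n α p f := by
  have hc' : ENNReal.ofReal (c ^ (1 / q)) ^ q = ENNReal.ofReal c := by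
    rw [ofReal_rpow_of_pos (by positivity), ← Real.rpow_mul hc.le, one_div_mul_cancel hq.ne',
      Real.rpow_one]
  refine iSup₂_le fun t ht => ?_
  rw [ofReal_rpow_mul_rpow_one_div_le_iff ht hq]
  calc μ {x | t < |f x|} ≤ ENNReal.ofReal c * besovCapacity n α p {x | t < |f x|} ^ (q / p) :=
        hcap _ (isOpen_lt continuous_const hfc.abs).measurableSet
    _ ≤ ENNReal.ofReal c * ((ENNReal.ofReal t⁻¹ * besovSeminorm n α p f) ^ p) ^ (q / p) := by
        gcongr
        exact besovCapacity_superlevel_le hp.le hf hfS hfc ht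
    _ = (ENNReal.ofReal t⁻¹ * (ENNReal.ofReal (c ^ (1 / q)) * besovSeminorm n α p f)) ^ q := by
        rw [← rpow_mul, mul_div_cancel₀ _ hp.ne', mul_left_comm,
          mul_rpow_of_nonneg (ENNReal.ofReal (c ^ (1 / q))) _ hq.le, hc']

end WeakTrace

theorem besov_trace_iff_capacity_bound_general (n : ℕ) (α p q : ℝ)
    (hp : 1 ≤ p) (hq : 1 ≤ q)
    (μ : MeasureTheory.OuterMeasure (EuclideanSpace ℝ (Fin n))) :
    (∃ c : ℝ, 0 < c ∧ ∀ f : EuclideanSpace ℝ (Fin n) → ℝ,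
        MemLp f (ENNReal.ofReal p) volume → besovSeminorm n α p f < ⊤ → Continuous f →
        (⨆ (t : ℝ) (_ : 0 < t), (ENNReal.ofReal t ^ q * μ {x | t < |f x|}) ^ (1 / q)) ≤
          ENNReal.ofReal c * besovSeminorm n α p f) ↔
    (∃ c : ℝ, 0 < c ∧ ∀ E : Set (EuclideanSpace ℝ (Fin n)), MeasurableSet E →
        μ E ≤ ENNReal.ofReal c * besovCapacity n α p E ^ (q / p)) := by
  have hp₀ : 0 < p := one_pos.trans_le hp
  have hq₀ : 0 < q := one_pos.trans_le hq
  constructor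
  · rintro ⟨c, hc, htrace⟩
    exact ⟨(2 * c) ^ q, by positivity, fun E _ =>
      measure_le_mul_besovCapacity_of_weak_trace hp₀ hq₀ hc htrace E⟩
  · rintro ⟨c, hc, hcap⟩
    exact ⟨c ^ (1 / q), by positivity, fun f hf hfS hfc =>
      weak_trace_le_of_measure_le_mul_besovCapacity hp₀ hq₀ hc hcap hf hfS hfc⟩

theorem besov_trace_iff_capacity_bound (n : ℕ) (α p q : ℝ)
    (hα : α ∈ Set.Ioo (0 : ℝ) 1) (hp : 1 ≤ p) (hpn : p < (n : ℝ) / α) (hq : 1 ≤ q)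
    (μ : MeasureTheory.OuterMeasure (EuclideanSpace ℝ (Fin n))) :
    (∃ c : ℝ, 0 < c ∧ ∀ f : EuclideanSpace ℝ (Fin n) → ℝ,
        MemLp f (ENNReal.ofReal p) volume → besovSeminorm n α p f < ⊤ → Continuous f →
        (⨆ (t : ℝ) (_ : 0 < t), (ENNReal.ofReal t ^ q * μ {x | t < |f x|}) ^ (1 / q)) ≤
          ENNReal.ofReal c * besovSeminorm n α p f) ↔
    (∃ c : ℝ, 0 < c ∧ ∀ E : Set (EuclideanSpace ℝ (Fin n)), MeasurableSet E →
        μ E ≤ ENNReal.ofReal c * besovCapacity n α p E ^ (q / p)) :=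
  besov_trace_iff_capacity_bound_general n α p q hp hq μ
end
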